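/- arXiv:1402.6886 — 4 statements merged into one kernel-verified Lean document; each statement's English description precedes it below -/
import Mathlib

section
/- Let n ≥ r ≥ 2 be integers and H > 0, and define I(ξ) = ∫₀^ξ sinh(s)^{n−1}/cosh(s)^{r−1} ds, q(ξ) = sinh(ξ)^{2(n−r)/r} − (n·H·I(ξ))^{2/r}, and λ(ρ) = ∫₀^ρ √( (n·H·I(ξ))^{2/r} / q(ξ) ) dξ. Then q(ξ) > 0 for all ξ > 0 sufficiently small, and λ(ρ)/ρ² tends to H^{1/r}/2 as ρ → 0⁺. -/
/-! Near `0` we have `sinh ξ ~ ξ` and `cosh ξ ~ 1`, so l'Hôpital's rule (with the fundamental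
theorem of calculus) gives `n I(ξ) ~ ξⁿ`. Hence `(n H I(ξ))^(2/r) ~ H^(2/r) ξ^(e+2)` with
`e = 2(n-r)/r`, which is `o(ξ^e)`: so `q(ξ) ~ ξ^e > 0` and the integrand of `λ` is
asymptotic to `H^(1/r) ξ`. A second application of l'Hôpital's rule gives
`λ(ρ) ~ H^(1/r) ρ² / 2`. -/

open Real Set Filter Topology

theorem tendsto_rpow_const_nhdsGT_zero {k : ℝ} (hk : 0 < k) :
    Tendsto (fun x : ℝ => x ^ k) (𝓝[>] 0) (𝓝 0) := by
  simpa [zero_rpow hk.ne'] using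
    ((continuousAt_rpow_const 0 k (Or.inr hk.le)).tendsto).mono_left nhdsWithin_le_nhds

theorem tendsto_integral_div_rpow_nhdsGT {f : ℝ → ℝ} {k L δ : ℝ} (hk : -1 < k) (hδ : 0 < δ)
    (hf : ContinuousOn f (Ico 0 δ)) (hlim : Tendsto (fun x => f x / x ^ k) (𝓝[>] 0) (𝓝 L)) :
    Tendsto (fun x => (∫ t in 0..x, f t) / x ^ (k + 1)) (𝓝[>] 0) (𝓝 (L / (k + 1))) := by
  have hk1 : 0 < k + 1 := by linarith
  refine HasDerivAt.lhopital_zero_right_on_Ioo hδ (f' := f) (g' := fun x => (k + 1) * x ^ k)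
    (fun x hx => ?_) (fun x hx => ?_) (fun x hx => ?_) ?_ (tendsto_rpow_const_nhdsGT_zero hk1) ?_
  · exact intervalIntegral.integral_hasDerivAt_right
      ((hf.mono (Icc_subset_Ico_right hx.2)).intervalIntegrable_of_Icc hx.1.le)
      ((hf.mono Ioo_subset_Ico_self).stronglyMeasurableAtFilter isOpen_Ioo x hx)
      (hf.continuousAt (Ico_mem_nhds hx.1 hx.2))
  · simpa using hasDerivAt_rpow_const (p := k + 1) (Or.inl hx.1.ne')
  · exact mul_ne_zero hk1.ne' (rpow_pos_of_pos hx.1 k).ne'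
  · have hprim : ContinuousWithinAt (fun x => ∫ t in 0..x, f t) (Icc 0 (δ / 2)) 0 := by
      refine intervalIntegral.continuousWithinAt_primitive volume_singleton ?_
      rw [min_self, max_eq_right (by positivity)]
      exact (hf.mono (Icc_subset_Ico_right (by linarith))).intervalIntegrable_of_Icc
        (by positivity)
    simpa using (hprim.mono_of_mem_nhdsWithin (Icc_mem_nhdsGT (by linarith))).tendsto
  · refine (hlim.div_const (k + 1)).congr fun x => ?_
    rw [mul_comm, div_mul_eq_div_div]

theorem continuousOn_Ico_of_tendsto_div_rpow {f : ℝ → ℝ} {k L δ : ℝ} (hk : 0 < k)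
    (hf : ContinuousOn f (Ioo 0 δ)) (hf0 : f 0 = 0)
    (hlim : Tendsto (fun x => f x / x ^ k) (𝓝[>] 0) (𝓝 L)) : ContinuousOn f (Ico 0 δ) := by
  rintro x ⟨hx0, hxδ⟩
  rcases hx0.eq_or_lt with rfl | hx0
  · have h := hlim.mul (tendsto_rpow_const_nhdsGT_zero hk)
    rw [mul_zero] at h
    refine (continuousWithinAt_Ioi_iff_Ici.1 ?_).mono Ico_subset_Ici_self
    rw [ContinuousWithinAt, hf0]
    refine h.congr' ?_
    filter_upwards [self_mem_nhdsWithin] with x hx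
    exact div_mul_cancel₀ _ (rpow_pos_of_pos hx k).ne'
  · exact (hf.continuousAt (Ioo_mem_nhds hx0 hxδ)).continuousWithinAt

theorem tendsto_rpow_div_rpow_mul {g : ℝ → ℝ} {m c : ℝ} (w : ℝ) (hc : 0 < c)
    (h : Tendsto (fun x => g x / x ^ m) (𝓝[>] 0) (𝓝 c)) :
    Tendsto (fun x => g x ^ w / x ^ (m * w)) (𝓝[>] 0) (𝓝 (c ^ w)) := by
  refine (h.rpow_const (Or.inl hc.ne')).congr' ?_
  filter_upwards [h.eventually (lt_mem_nhds hc), self_mem_nhdsWithin] with x hgx hx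
  have hxm : 0 < x ^ m := rpow_pos_of_pos hx m
  have hg : 0 < g x := (div_pos_iff_of_pos_right hxm).1 hgx
  rw [div_rpow hg.le hxm.le, ← rpow_mul (le_of_lt hx)]

theorem tendsto_sinh_div_self_nhdsGT : Tendsto (fun x => sinh x / x) (𝓝[>] 0) (𝓝 1) := by
  simpa [div_eq_inv_mul] using (hasDerivAt_sinh 0).tendsto_slope_zero_right

theorem continuous_sinh_rpow_div_cosh_rpow {a : ℝ} (ha : 0 ≤ a) (b : ℝ) :
    Continuous fun x => sinh x ^ a / cosh x ^ b :=
  ((continuous_rpow_const ha).comp continuous_sinh).div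
    (continuous_cosh.rpow_const fun x => Or.inl (cosh_pos x).ne')
    fun x => (rpow_pos_of_pos (cosh_pos x) b).ne'

theorem tendsto_integral_sinh_rpow_div_cosh_rpow {a : ℝ} (ha : 0 ≤ a) (b : ℝ) :
    Tendsto (fun x => (∫ s in 0..x, sinh s ^ a / cosh s ^ b) / x ^ (a + 1)) (𝓝[>] 0)
      (𝓝 (1 / (a + 1))) := by
  refine tendsto_integral_div_rpow_nhdsGT (by linarith) one_pos
    (continuous_sinh_rpow_div_cosh_rpow ha b).continuousOn ?_
  have hcosh : Tendsto (fun x => cosh x ^ b) (𝓝[>] 0) (𝓝 1) := by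
    simpa using ((continuous_cosh.rpow_const fun x => Or.inl (cosh_pos x).ne').tendsto 0).mono_left
      nhdsWithin_le_nhds
  have h := (tendsto_sinh_div_self_nhdsGT.rpow_const (p := a) (Or.inl one_ne_zero)).div hcosh
    one_ne_zero
  rw [one_rpow, div_one] at h
  refine h.congr' ?_
  filter_upwards [self_mem_nhdsWithin] with x (hx : 0 < x)
  show (sinh x / x) ^ a / cosh x ^ b = sinh x ^ a / cosh x ^ b / x ^ a
  rw [div_rpow (sinh_nonneg_iff.2 hx.le) hx.le, div_right_comm]

theorem tendsto_rpow_mul_integral_div_rpow {n : ℝ} (hn : 1 ≤ n) (b w : ℝ) {H : ℝ} (hH : 0 < H) :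
    Tendsto (fun x => (n * H * ∫ s in 0..x, sinh s ^ (n - 1) / cosh s ^ b) ^ w / x ^ (n * w))
      (𝓝[>] 0) (𝓝 (H ^ w)) := by
  refine tendsto_rpow_div_rpow_mul w hH ?_
  have h := (tendsto_integral_sinh_rpow_div_cosh_rpow (sub_nonneg.2 hn) b).const_mul (n * H)
  rw [sub_add_cancel, mul_one_div, mul_div_cancel_left₀ _ (by linarith : (0 : ℝ) < n).ne'] at h
  simpa only [mul_div_assoc] using h

section SinhRpowSub

variable {P : ℝ → ℝ} {e A : ℝ}

theorem tendsto_sinh_rpow_sub_div_rpow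
    (hP : Tendsto (fun x => P x / x ^ (e + 2)) (𝓝[>] 0) (𝓝 A)) :
    Tendsto (fun x => (sinh x ^ e - P x) / x ^ e) (𝓝[>] 0) (𝓝 1) := by
  have hsq : Tendsto (fun x : ℝ => x ^ 2) (𝓝[>] 0) (𝓝 0) := by
    simpa using ((continuous_pow 2).tendsto (0 : ℝ)).mono_left nhdsWithin_le_nhds
  have h := (tendsto_sinh_div_self_nhdsGT.rpow_const (p := e) (Or.inl one_ne_zero)).sub
    (hP.mul hsq)
  rw [one_rpow, mul_zero, sub_zero] at h
  refine h.congr' ?_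
  filter_upwards [self_mem_nhdsWithin] with x (hx : 0 < x)
  show (sinh x / x) ^ e - P x / x ^ (e + 2) * x ^ 2 = (sinh x ^ e - P x) / x ^ e
  rw [div_rpow (sinh_nonneg_iff.2 hx.le) hx.le, rpow_add hx, rpow_two]
  field_simp

theorem eventually_sinh_rpow_sub_pos
    (hP : Tendsto (fun x => P x / x ^ (e + 2)) (𝓝[>] 0) (𝓝 A)) :
    ∀ᶠ x in 𝓝[>] 0, 0 < sinh x ^ e - P x := by
  filter_upwards [(tendsto_sinh_rpow_sub_div_rpow hP).eventually (lt_mem_nhds one_pos),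
    self_mem_nhdsWithin] with x hx hx0
  exact (div_pos_iff_of_pos_right (rpow_pos_of_pos hx0 e)).1 hx

theorem tendsto_sqrt_div_sinh_rpow_sub_div_self
    (hP : Tendsto (fun x => P x / x ^ (e + 2)) (𝓝[>] 0) (𝓝 A)) :
    Tendsto (fun x => √(P x / (sinh x ^ e - P x)) / x) (𝓝[>] 0) (𝓝 √A) := by
  have h := (hP.div (tendsto_sinh_rpow_sub_div_rpow hP) one_ne_zero).sqrt
  rw [div_one] at h
  refine h.congr' ?_
  filter_upwards [self_mem_nhdsWithin] with x (hx : 0 < x)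
  show √(P x / x ^ (e + 2) / ((sinh x ^ e - P x) / x ^ e)) = √(P x / (sinh x ^ e - P x)) / x
  rw [← sqrt_sq hx.le, ← sqrt_div' _ (sq_nonneg x), sqrt_sq hx.le, rpow_add hx, rpow_two]
  have := rpow_pos_of_pos hx e
  field_simp

theorem tendsto_integral_sqrt_div_sinh_rpow_sub_div_sq {δ : ℝ} (hδ : 0 < δ)
    (hPc : ContinuousOn P (Ioo 0 δ)) (hP0 : P 0 = 0)
    (hP : Tendsto (fun x => P x / x ^ (e + 2)) (𝓝[>] 0) (𝓝 A))
    (hpos : ∀ x ∈ Ioo 0 δ, 0 < sinh x ^ e - P x) :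
    Tendsto (fun ρ => (∫ x in 0..ρ, √(P x / (sinh x ^ e - P x))) / ρ ^ 2) (𝓝[>] 0)
      (𝓝 (√A / 2)) := by
  have hlim : Tendsto (fun x => √(P x / (sinh x ^ e - P x)) / x ^ (1 : ℝ)) (𝓝[>] 0) (𝓝 √A) := by
    simpa only [rpow_one] using tendsto_sqrt_div_sinh_rpow_sub_div_self hP
  have hcont : ContinuousOn (fun x => √(P x / (sinh x ^ e - P x))) (Ioo 0 δ) :=
    (hPc.div ((continuous_sinh.continuousOn.rpow_const fun x hx =>
      Or.inl (sinh_pos_iff.2 hx.1).ne').sub hPc) fun x hx => (hpos x hx).ne').sqrt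
  convert tendsto_integral_div_rpow_nhdsGT (by norm_num) hδ
    (continuousOn_Ico_of_tendsto_div_rpow one_pos hcont (by simp [hP0]) hlim) hlim using 2 <;>
    norm_num

end SinhRpowSub

/-- `q > 0` near `0⁺` and the rotational profile satisfies
`λ(ρ)/ρ² → H^(1/r)/2` as `ρ → 0⁺`. -/
theorem stmt7 (n r : ℕ) (hr : 2 ≤ r) (hn : r ≤ n) (H : ℝ) (hH : 0 < H)
    (I q lam : ℝ → ℝ)
    (hI : ∀ ξ : ℝ, I ξ
      = ∫ s in (0 : ℝ)..ξ, Real.sinh s ^ ((n : ℝ) - 1) / Real.cosh s ^ ((r : ℝ) - 1))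
    (hq : ∀ ξ : ℝ, q ξ
      = Real.sinh ξ ^ (2 * ((n : ℝ) - r) / r) - ((n : ℝ) * H * I ξ) ^ (2 / (r : ℝ)))
    (hlam : ∀ ρ : ℝ, lam ρ
      = ∫ ξ in (0 : ℝ)..ρ, Real.sqrt ((((n : ℝ) * H * I ξ) ^ (2 / (r : ℝ))) / q ξ)) :
    (∃ ε > (0 : ℝ), ∀ ξ ∈ Set.Ioo (0 : ℝ) ε, 0 < q ξ) ∧
    Filter.Tendsto (fun ρ : ℝ => lam ρ / ρ ^ 2) (nhdsWithin 0 (Set.Ioi 0))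
      (nhds (H ^ (1 / (r : ℝ)) / 2)) := by
  have hr0 : (0 : ℝ) < r := by exact_mod_cast (by omega : 0 < r)
  have hn1 : (1 : ℝ) ≤ n := by exact_mod_cast (by omega : 1 ≤ n)
  set P : ℝ → ℝ := fun ξ => ((n : ℝ) * H * I ξ) ^ (2 / (r : ℝ))
  set e : ℝ := 2 * ((n : ℝ) - r) / r
  obtain rfl : q = fun ξ => sinh ξ ^ e - P ξ := funext hq
  have hP : Tendsto (fun ξ => P ξ / ξ ^ (e + 2)) (𝓝[>] 0) (𝓝 (H ^ (2 / (r : ℝ)))) := by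
    convert tendsto_rpow_mul_integral_div_rpow hn1 ((r : ℝ) - 1) (2 / r) hH using 4 with ξ
    · rw [hI]
    · simp only [e]
      field_simp
      ring
  have hPc : Continuous P := by
    refine (continuous_const.mul ?_).rpow_const fun _ => Or.inr (by positivity)
    rw [funext hI]
    exact intervalIntegral.continuous_primitive (fun a b =>
      (continuous_sinh_rpow_div_cosh_rpow (sub_nonneg.2 hn1) _).intervalIntegrable a b) 0
  obtain ⟨δ, hδ, hqδ⟩ := (nhdsGT_basis 0).eventually_iff.1 (eventually_sinh_rpow_sub_pos hP)
  refine ⟨⟨δ, hδ, hqδ⟩, ?_⟩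
  have hP0 : P 0 = 0 := by simp [P, hI, zero_rpow (by positivity : 2 / (r : ℝ) ≠ 0)]
  convert tendsto_integral_sqrt_div_sinh_rpow_sub_div_sq hδ hPc.continuousOn hP0 hP hqδ
    using 2 with ρ
  · rw [hlam]
  · rw [sqrt_eq_rpow, ← rpow_mul hH.le]
    ring_nf
end

section
/- For all integers n > r ≥ 2 and every real ξ > 0: sinh(ξ)^{n−2}·cosh(ξ)^{2−r} > (n−r)·∫₀^ξ sinh(s)^{n−1}/cosh(s)^{r−1} ds. -/
/-!
The gap `R(ξ) = sinh(ξ)^(a-2) cosh(ξ)^(2-b) - (a-b) ∫₀^ξ sinh^(a-1)/cosh^(b-1)` vanishes at `0`,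
and since `cosh² - sinh² = 1` its derivative is `(a-2) sinh(ξ)^(a-3) cosh(ξ)^(1-b) > 0` for
`ξ > 0` and any `a > 2`; hence `R(ξ) > 0` for `ξ > 0`.
-/

open Real

lemma hasDerivAt_sinh_rpow_mul_cosh_rpow (p q : ℝ) {x : ℝ} (hx : sinh x ≠ 0) :
    HasDerivAt (fun x => sinh x ^ p * cosh x ^ q)
      (cosh x * p * sinh x ^ (p - 1) * cosh x ^ q + sinh x ^ p * (sinh x * q * cosh x ^ (q - 1)))
      x :=
  ((hasDerivAt_sinh x).rpow_const (Or.inl hx)).mul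
    ((hasDerivAt_cosh x).rpow_const (Or.inl (cosh_pos x).ne'))

lemma continuous_sinh_rpow_div_cosh_rpow_s8 (p : ℝ) (hp : 0 ≤ p) (q : ℝ) :
    Continuous fun s => sinh s ^ p / cosh s ^ q :=
  (continuous_sinh.rpow_const fun _ => Or.inr hp).div
    (continuous_cosh.rpow_const fun x => Or.inl (cosh_pos x).ne')
    fun x => (rpow_pos_of_pos (cosh_pos x) q).ne'

noncomputable def sinhCoshGap (a b ξ : ℝ) : ℝ :=
  sinh ξ ^ (a - 2) * cosh ξ ^ (2 - b) -
    (a - b) * ∫ s in (0 : ℝ)..ξ, sinh s ^ (a - 1) / cosh s ^ (b - 1)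

lemma sinhCoshGap_zero {a : ℝ} (ha : 2 < a) (b : ℝ) : sinhCoshGap a b 0 = 0 := by
  simp [sinhCoshGap, zero_rpow (sub_ne_zero.2 ha.ne')]

lemma continuous_sinhCoshGap {a : ℝ} (ha : 2 < a) (b : ℝ) : Continuous (sinhCoshGap a b) :=
  ((continuous_sinh.rpow_const fun _ => Or.inr (by linarith)).mul
    (continuous_cosh.rpow_const fun x => Or.inl (cosh_pos x).ne')).sub
    (continuous_const.mul (continuous_iff_continuousAt.2 fun x =>
      ((continuous_sinh_rpow_div_cosh_rpow_s8 (a - 1) (by linarith) (b - 1)).integral_hasStrictDerivAt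
        0 x).hasDerivAt.continuousAt))

lemma hasDerivAt_sinhCoshGap {a : ℝ} (ha : 2 < a) (b : ℝ) {x : ℝ} (hx : 0 < x) :
    HasDerivAt (sinhCoshGap a b) ((a - 2) * sinh x ^ (a - 3) * cosh x ^ (1 - b)) x := by
  have hS : 0 < sinh x := sinh_pos_iff.2 hx
  have hC : 0 < cosh x := cosh_pos x
  have hI := ((continuous_sinh_rpow_div_cosh_rpow_s8 (a - 1) (by linarith) (b - 1))
    |>.integral_hasStrictDerivAt 0 x).hasDerivAt
  refine ((hasDerivAt_sinh_rpow_mul_cosh_rpow (a - 2) (2 - b) hS.ne').sub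
    (hI.const_mul (a - b))).congr_deriv ?_
  set S := sinh x
  set C := cosh x
  have hSC : C ^ 2 = 1 + S ^ 2 := cosh_sq' x
  rw [show a - 2 - 1 = a - 3 by ring, show 2 - b - 1 = 1 - b by ring,
    show a - 2 = a - 3 + 1 by ring, show a - 1 = a - 3 + 2 by ring,
    show 2 - b = 1 - b + 1 by ring, show b - 1 = -(1 - b) by ring,
    rpow_add_one hS.ne', rpow_add_one hC.ne', rpow_add hS, rpow_neg hC.le, rpow_two,
    div_inv_eq_mul]
  linear_combination (a - 2) * S ^ (a - 3) * C ^ (1 - b) * hSC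

lemma sinhCoshGap_pos {a : ℝ} (ha : 2 < a) (b : ℝ) {ξ : ℝ} (hξ : 0 < ξ) :
    0 < sinhCoshGap a b ξ := by
  have hmono : StrictMonoOn (sinhCoshGap a b) (Set.Ici 0) := by
    refine strictMonoOn_of_deriv_pos (convex_Ici 0) (continuous_sinhCoshGap ha b).continuousOn
      fun x hx => ?_
    rw [interior_Ici] at hx
    rw [(hasDerivAt_sinhCoshGap ha b hx).deriv]
    have := sinh_pos_iff.2 hx
    have := cosh_pos x
    have : 0 < a - 2 := by linarith
    positivity
  simpa [sinhCoshGap_zero ha] using hmono Set.self_mem_Ici hξ.le hξ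

/-- for `n > r ≥ 2` and `ξ > 0`,
`sinh(ξ)^(n−2)·cosh(ξ)^(2−r) > (n−r)·∫₀^ξ sinh(s)^(n−1)/cosh(s)^(r−1) ds`. -/
theorem stmt8 (n r : ℕ) (hr : 2 ≤ r) (hnr : r < n) (ξ : ℝ) (hξ : 0 < ξ) :
    Real.sinh ξ ^ ((n : ℝ) - 2) * Real.cosh ξ ^ (2 - (r : ℝ))
      > ((n : ℝ) - r) *
        ∫ s in (0 : ℝ)..ξ, Real.sinh s ^ ((n : ℝ) - 1) / Real.cosh s ^ ((r : ℝ) - 1) := by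
  have hn : (2 : ℝ) < n := by exact_mod_cast hr.trans_lt hnr
  exact sub_pos.1 (sinhCoshGap_pos hn r hξ)
end

section
/- Let n ≥ r ≥ 2 be integers and ρ > 0. For H > 0 write I(ξ) = ∫₀^ξ sinh(s)^{n−1}/cosh(s)^{r−1} ds, q_H(ξ) = sinh(ξ)^{2(n−r)/r} − (n·H·I(ξ))^{2/r}, and λ_H(ρ) = ∫₀^ρ √( (n·H·I(ξ))^{2/r} / q_H(ξ) ) dξ. If 0 < H₁ < H₂ and q_{H₂}(ξ) > 0 for all ξ ∈ (0, ρ), then q_{H₁}(ξ) > 0 for all ξ ∈ (0, ρ) and λ_{H₁}(ρ) < λ_{H₂}(ρ). -/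
/-!
For `ξ > 0` the numerator `(n H I(ξ))^{2/r}` increases with `H` while `q_H(ξ)` decreases, so on
`(0, ρ)` the integrand of `λ_{H₁}` lies strictly below that of `λ_{H₂}`; what remains is that both
integrals converge. Near `0`, `I(ξ) ≤ ξ sinh(ξ)^{n-1} = o(sinh(ξ)^{n-r})`, so the integrand tends
to `0`. Near `ρ`, either `q_H(ρ) > 0`, or `q_H(ρ) = 0` and then `q_H'(ρ) < 0`: eliminating `H`
through `n H I(ρ) = sinh(ρ)^{n-r}`, the sign of `q_H'(ρ)` is that of
`(n - r) I(ρ) cosh ρ - I'(ρ) sinh ρ`, which is negative because `sinh^n / cosh^r - (n - r) I`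
vanishes at `0` and has derivative `r sinh^{n-1} / cosh^{r+1} > 0`. Either way
`q_H(ξ) ≥ ε (ρ - ξ)` near `ρ`, so the integrand is `O((ρ - ξ)^{-1/2})` there.
-/

open Real Set Filter Topology MeasureTheory

theorem intervalIntegrable_of_continuousOn_Ico_of_norm_le_rpow {f : ℝ → ℝ} {a b C s : ℝ}
    (hab : a < b) (hs : -1 < s) (hf : ContinuousOn f (Ico a b))
    (hb : ∀ᶠ x in 𝓝[<] b, ‖f x‖ ≤ C * (b - x) ^ s) :
    IntervalIntegrable f volume a b := by
  obtain ⟨l, hlb, hl⟩ := (mem_nhdsLT_iff_exists_Ioo_subset).1 hb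
  set m := max a l
  have hmb : m < b := max_lt hab hlb
  have hleft : IntervalIntegrable f volume a m := by
    refine (hf.mono ?_).intervalIntegrable
    rw [uIcc_of_le (le_max_left a l)]
    exact Icc_subset_Ico_right hmb
  have hmajorant : IntervalIntegrable (fun x => C * (b - x) ^ s) volume m b := by
    have := (intervalIntegral.intervalIntegrable_rpow' hs (a := b - m) (b := 0)).comp_sub_left b
    simpa using this.const_mul C
  have hIoo : volume.restrict (uIoc m b) = volume.restrict (Ioo m b) := by
    rw [uIoc_of_le hmb.le]
    exact (Measure.restrict_congr_set Ioo_ae_eq_Ioc).symm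
  refine hleft.trans (hmajorant.mono_fun' ?_ ?_) <;> rw [hIoo]
  · exact (hf.mono fun x hx => ⟨(le_max_left a l).trans hx.1.le, hx.2⟩).aestronglyMeasurable
      measurableSet_Ioo
  · exact ae_restrict_of_forall_mem measurableSet_Ioo fun x hx =>
      hl ⟨(le_max_right a l).trans_lt hx.1, hx.2⟩

theorem HasDerivAt.eventually_sub_mul_le_of_neg {g : ℝ → ℝ} {g' x : ℝ} (hg : HasDerivAt g g' x)
    (hg' : g' < 0) : ∀ᶠ y in 𝓝[<] x, g x - g' / 2 * (x - y) ≤ g y := by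
  have h := (hasDerivAt_iff_isLittleO.1 hg).def (c := -g' / 2) (by linarith)
  filter_upwards [nhdsWithin_le_nhds h, self_mem_nhdsWithin] with y hy (hyx : y < x)
  rw [Real.norm_eq_abs, Real.norm_eq_abs, abs_of_neg (sub_neg.2 hyx), smul_eq_mul] at hy
  nlinarith [(abs_le.1 hy).1]

theorem ContinuousAt.eventually_half_mul_sub_le {g : ℝ → ℝ} {x : ℝ} (hg : ContinuousAt g x)
    (hx : 0 < g x) : ∀ᶠ y in 𝓝[<] x, g x / 2 * (x - y) ≤ g y := by
  filter_upwards [nhdsWithin_le_nhds (hg.eventually (lt_mem_nhds (half_lt_self hx))),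
    nhdsWithin_le_nhds (Ioi_mem_nhds (sub_one_lt x)), self_mem_nhdsWithin]
    with y hgy (hy : x - 1 < y) (hyx : y < x)
  nlinarith

theorem integral_lt_integral_of_forall_mem_Ioo_lt {f g : ℝ → ℝ} {a b : ℝ} (hab : a < b)
    (hf : IntervalIntegrable f volume a b) (hg : IntervalIntegrable g volume a b)
    (hlt : ∀ x ∈ Ioo a b, f x < g x) : ∫ x in a..b, f x < ∫ x in a..b, g x := by
  have := intervalIntegral.intervalIntegral_pos_of_pos_on (hg.sub hf)
    (fun x hx => sub_pos.2 (hlt x hx)) hab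
  rwa [intervalIntegral.integral_sub hg hf, sub_pos] at this

/-- The exponents `n - 1`, `r - 1` are truncated natural numbers; for `n, r ≥ 1` this is the
paper's integrand (`integral_sinh_rpow_div_cosh_rpow`). -/
noncomputable def profileDensity (n r : ℕ) (s : ℝ) : ℝ := sinh s ^ (n - 1) / cosh s ^ (r - 1)

noncomputable def profileIntegral (n r : ℕ) (ξ : ℝ) : ℝ := ∫ s in 0..ξ, profileDensity n r s

section ProfileIntegral

variable {n r : ℕ}

variable (n r) in
theorem continuous_profileDensity : Continuous (profileDensity n r) :=
  (continuous_sinh.pow _).div (continuous_cosh.pow _) fun s => (pow_pos (cosh_pos s) _).ne'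

theorem profileDensity_nonneg {s : ℝ} (hs : 0 ≤ s) : 0 ≤ profileDensity n r s := by
  have := sinh_nonneg_iff.2 hs
  unfold profileDensity
  positivity

theorem profileDensity_pos {s : ℝ} (hs : 0 < s) : 0 < profileDensity n r s := by
  have := sinh_pos_iff.2 hs
  unfold profileDensity
  positivity

theorem integral_sinh_rpow_div_cosh_rpow (hn : 0 < n) (hr : 0 < r) (ξ : ℝ) :
    ∫ s in (0 : ℝ)..ξ, sinh s ^ ((n : ℝ) - 1) / cosh s ^ ((r : ℝ) - 1) = profileIntegral n r ξ :=
  intervalIntegral.integral_congr fun s _ => by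
    rw [profileDensity, ← Nat.cast_pred hn, ← Nat.cast_pred hr, rpow_natCast, rpow_natCast]

theorem hasDerivAt_profileIntegral (ξ : ℝ) :
    HasDerivAt (profileIntegral n r) (profileDensity n r ξ) ξ :=
  ((continuous_profileDensity n r).integral_hasStrictDerivAt 0 ξ).hasDerivAt

theorem continuous_profileIntegral : Continuous (profileIntegral n r) :=
  continuous_iff_continuousAt.2 fun ξ => (hasDerivAt_profileIntegral ξ).continuousAt

theorem profileIntegral_nonneg {ξ : ℝ} (hξ : 0 ≤ ξ) : 0 ≤ profileIntegral n r ξ :=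
  intervalIntegral.integral_nonneg hξ fun _ hs => profileDensity_nonneg hs.1

theorem profileIntegral_pos {ξ : ℝ} (hξ : 0 < ξ) : 0 < profileIntegral n r ξ :=
  intervalIntegral.intervalIntegral_pos_of_pos_on
    ((continuous_profileDensity n r).intervalIntegrable 0 ξ)
    (fun _ hs => profileDensity_pos hs.1) hξ

theorem monotoneOn_profileIntegral : MonotoneOn (profileIntegral n r) (Ici 0) :=
  monotoneOn_of_deriv_nonneg (convex_Ici 0) continuous_profileIntegral.continuousOn
    (fun ξ _ => (hasDerivAt_profileIntegral ξ).differentiableAt.differentiableWithinAt)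
    fun ξ hξ => by
      rw [(hasDerivAt_profileIntegral ξ).deriv]
      exact profileDensity_nonneg (interior_subset hξ)

theorem profileIntegral_le_mul_sinh_pow {ξ : ℝ} (hξ : 0 ≤ ξ) :
    profileIntegral n r ξ ≤ ξ * sinh ξ ^ (n - 1) := by
  have hle : ∀ s ∈ Icc 0 ξ, profileDensity n r s ≤ sinh ξ ^ (n - 1) := fun s hs =>
    calc profileDensity n r s ≤ sinh s ^ (n - 1) :=
          div_le_self (pow_nonneg (sinh_nonneg_iff.2 hs.1) _) (one_le_pow₀ (one_le_cosh s))
      _ ≤ sinh ξ ^ (n - 1) :=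
          pow_le_pow_left₀ (sinh_nonneg_iff.2 hs.1) (sinh_le_sinh.2 hs.2) _
  simpa [profileIntegral] using intervalIntegral.integral_mono_on hξ
    ((continuous_profileDensity n r).intervalIntegrable 0 ξ)
    (intervalIntegrable_const (μ := volume)) hle

variable (n r) in
theorem hasDerivAt_sinh_pow_div_cosh_pow_sub_profileIntegral (ξ : ℝ) :
    HasDerivAt (fun ξ => sinh ξ ^ (n + 1) / cosh ξ ^ (r + 1)
        - ((n : ℝ) - r) * profileIntegral (n + 1) (r + 1) ξ)
      ((r + 1) * sinh ξ ^ n / cosh ξ ^ (r + 2)) ξ := by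
  have hc := (cosh_pos ξ).ne'
  refine ((((hasDerivAt_sinh ξ).pow (n + 1)).div ((hasDerivAt_cosh ξ).pow (r + 1))
    (pow_ne_zero _ hc)).sub
      ((hasDerivAt_profileIntegral ξ).const_mul ((n : ℝ) - r))).congr_deriv ?_
  simp only [profileDensity, Nat.add_sub_cancel, Nat.cast_add, Nat.cast_one, Pi.pow_apply]
  field_simp
  linear_combination (cosh ξ ^ r) ^ 3 * sinh ξ ^ n * cosh ξ ^ 2 * ((r : ℝ) + 1) * cosh_sq ξ

theorem sub_mul_profileIntegral_mul_cosh_lt (hr : 0 < r) (hn : 0 < n) {ρ : ℝ} (hρ : 0 < ρ) :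
    ((n : ℝ) - r) * profileIntegral n r ρ * cosh ρ < profileDensity n r ρ * sinh ρ := by
  obtain ⟨n, rfl⟩ := Nat.exists_eq_add_one_of_ne_zero hn.ne'
  obtain ⟨r, rfl⟩ := Nat.exists_eq_add_one_of_ne_zero hr.ne'
  have hcont : Continuous fun ξ => (r + 1) * sinh ξ ^ n / cosh ξ ^ (r + 2) :=
    (continuous_const.mul (continuous_sinh.pow n)).div (continuous_cosh.pow _)
      fun ξ => (pow_pos (cosh_pos ξ) _).ne'
  have hgrowth := intervalIntegral.intervalIntegral_pos_of_pos_on (hcont.intervalIntegrable 0 ρ)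
    (fun ξ hξ => by have := sinh_pos_iff.2 hξ.1; have := cosh_pos ξ; positivity) hρ
  rw [intervalIntegral.integral_eq_sub_of_hasDerivAt
    (fun ξ _ => hasDerivAt_sinh_pow_div_cosh_pow_sub_profileIntegral n r ξ)
    (hcont.intervalIntegrable 0 ρ)] at hgrowth
  have hI0 : profileIntegral (n + 1) (r + 1) 0 = 0 := intervalIntegral.integral_same
  simp only [sinh_zero, cosh_zero, hI0, ne_eq, Nat.add_eq_zero_iff, one_ne_zero, and_false,
    not_false_eq_true, zero_pow, one_pow, div_one, mul_zero, sub_zero] at hgrowth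
  have hc := cosh_pos ρ
  have hlt := (lt_div_iff₀ (pow_pos hc (r + 1))).1 (sub_pos.1 hgrowth)
  rw [profileDensity, Nat.add_sub_cancel, Nat.add_sub_cancel, div_mul_eq_mul_div,
    lt_div_iff₀ (pow_pos hc _)]
  push_cast
  linear_combination hlt

theorem tendsto_profileIntegral_div_sinh_pow (hr : 0 < r) (hn : r ≤ n) :
    Tendsto (fun ξ => profileIntegral n r ξ / sinh ξ ^ (n - r)) (𝓝[>] 0) (𝓝 0) := by
  have hbound : Tendsto (fun ξ => ξ * sinh ξ ^ (r - 1)) (𝓝[>] 0) (𝓝 0) :=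
    tendsto_nhdsWithin_of_tendsto_nhds <|
      (by fun_prop : Continuous fun ξ : ℝ => ξ * sinh ξ ^ (r - 1)).tendsto' 0 0 (by simp)
  refine squeeze_zero' ?_ ?_ hbound
  · filter_upwards [self_mem_nhdsWithin] with ξ (hξ : 0 < ξ)
    have := sinh_pos_iff.2 hξ
    have := profileIntegral_nonneg (n := n) (r := r) hξ.le
    positivity
  · filter_upwards [self_mem_nhdsWithin] with ξ (hξ : 0 < ξ)
    rw [div_le_iff₀ (pow_pos (sinh_pos_iff.2 hξ) _), mul_assoc, ← pow_add,
      show r - 1 + (n - r) = n - 1 by omega]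
    exact profileIntegral_le_mul_sinh_pow hξ.le

end ProfileIntegral

noncomputable def profileNumerator (n r : ℕ) (H ξ : ℝ) : ℝ :=
  ((n : ℝ) * H * profileIntegral n r ξ) ^ (2 / (r : ℝ))

noncomputable def profileQ (n r : ℕ) (H ξ : ℝ) : ℝ :=
  sinh ξ ^ (2 * ((n : ℝ) - r) / r) - profileNumerator n r H ξ

noncomputable def profileIntegrand (n r : ℕ) (H ξ : ℝ) : ℝ :=
  √(profileNumerator n r H ξ / profileQ n r H ξ)

section ProfileIntegrand

variable {n r : ℕ} {H ρ : ℝ}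

theorem continuous_profileNumerator (hr : 0 < r) : Continuous (profileNumerator n r H) :=
  (continuous_rpow_const (by positivity)).comp (continuous_const.mul continuous_profileIntegral)

theorem continuous_profileQ (hr : 0 < r) (hn : r ≤ n) : Continuous (profileQ n r H) := by
  have he : (0 : ℝ) ≤ 2 * ((n : ℝ) - r) / r :=
    div_nonneg (mul_nonneg zero_le_two (sub_nonneg.2 (by exact_mod_cast hn))) r.cast_nonneg
  exact ((continuous_rpow_const he).comp continuous_sinh).sub (continuous_profileNumerator hr)

theorem profileNumerator_nonneg (hH : 0 ≤ H) {ξ : ℝ} (hξ : 0 ≤ ξ) :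
    0 ≤ profileNumerator n r H ξ := by
  have := profileIntegral_nonneg (n := n) (r := r) hξ
  unfold profileNumerator
  positivity

theorem profileNumerator_le_profileNumerator (hr : 0 < r) (hH : 0 ≤ H) {ξ ξ' : ℝ} (hξ : 0 ≤ ξ)
    (hξξ' : ξ ≤ ξ') : profileNumerator n r H ξ ≤ profileNumerator n r H ξ' := by
  have := profileIntegral_nonneg (n := n) (r := r) hξ
  exact rpow_le_rpow (by positivity)
    (by gcongr; exact monotoneOn_profileIntegral hξ (hξ.trans hξξ') hξξ') (by positivity)

theorem profileNumerator_lt_profileNumerator (hr : 0 < r) (hn : 0 < n) {H₁ H₂ : ℝ}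
    (hH₁ : 0 < H₁) (hH₁₂ : H₁ < H₂) {ξ : ℝ} (hξ : 0 < ξ) :
    profileNumerator n r H₁ ξ < profileNumerator n r H₂ ξ := by
  have hI := profileIntegral_pos (n := n) (r := r) hξ
  have hn' : (0 : ℝ) < n := by exact_mod_cast hn
  exact rpow_lt_rpow (by positivity) (by gcongr) (by positivity)

theorem profileQ_lt_profileQ (hr : 0 < r) (hn : 0 < n) {H₁ H₂ : ℝ} (hH₁ : 0 < H₁)
    (hH₁₂ : H₁ < H₂) {ξ : ℝ} (hξ : 0 < ξ) : profileQ n r H₂ ξ < profileQ n r H₁ ξ :=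
  sub_lt_sub_left (profileNumerator_lt_profileNumerator hr hn hH₁ hH₁₂ hξ) _

theorem profileIntegrand_lt_profileIntegrand (hr : 0 < r) (hn : 0 < n) {H₁ H₂ : ℝ}
    (hH₁ : 0 < H₁) (hH₁₂ : H₁ < H₂) {ξ : ℝ} (hξ : 0 < ξ) (hq : 0 < profileQ n r H₂ ξ) :
    profileIntegrand n r H₁ ξ < profileIntegrand n r H₂ ξ := by
  have hq₁₂ := profileQ_lt_profileQ hr hn hH₁ hH₁₂ hξ
  refine sqrt_lt_sqrt (div_nonneg (profileNumerator_nonneg hH₁.le hξ.le) (hq.trans hq₁₂).le) ?_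
  exact div_lt_div₀ (profileNumerator_lt_profileNumerator hr hn hH₁ hH₁₂ hξ) hq₁₂.le
    (profileNumerator_nonneg (hH₁.trans hH₁₂).le hξ.le) hq

theorem sinh_rpow_eq_sinh_pow_rpow (hn : r ≤ n) {ξ : ℝ} (hξ : 0 ≤ ξ) :
    sinh ξ ^ (2 * ((n : ℝ) - r) / r) = (sinh ξ ^ (n - r)) ^ (2 / (r : ℝ)) := by
  rw [← rpow_natCast_mul (sinh_nonneg_iff.2 hξ), Nat.cast_sub hn, mul_div_assoc', mul_comm]

theorem tendsto_profileIntegrand_zero (hr : 0 < r) (hn : r ≤ n) (hH : 0 ≤ H) :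
    Tendsto (profileIntegrand n r H) (𝓝[>] 0) (𝓝 0) := by
  set p : ℝ := 2 / r
  have hp : 0 < p := by positivity
  set u := fun ξ => (n : ℝ) * H * (profileIntegral n r ξ / sinh ξ ^ (n - r))
  have hu : Tendsto (fun ξ => u ξ ^ p) (𝓝[>] 0) (𝓝 0) := by
    simpa [zero_rpow hp.ne'] using
      ((tendsto_profileIntegral_div_sinh_pow hr hn).const_mul ((n : ℝ) * H)).rpow_const
        (Or.inr hp.le)
  have hlim : Tendsto (fun ξ => √(u ξ ^ p / (1 - u ξ ^ p))) (𝓝[>] 0) (𝓝 0) := by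
    simpa using (hu.div (tendsto_const_nhds.sub hu) (by simp)).sqrt
  refine hlim.congr' ?_
  filter_upwards [self_mem_nhdsWithin] with ξ (hξ : 0 < ξ)
  have hs : 0 < sinh ξ ^ (n - r) := pow_pos (sinh_pos_iff.2 hξ) _
  have hu0 : 0 ≤ u ξ := by
    have := profileIntegral_nonneg (n := n) (r := r) hξ.le
    positivity
  have hb : (n : ℝ) * H * profileIntegral n r ξ = u ξ * sinh ξ ^ (n - r) := by
    simp only [u]
    field_simp
  rw [profileIntegrand, profileQ, profileNumerator, sinh_rpow_eq_sinh_pow_rpow hn hξ.le, hb,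
    mul_rpow hu0 hs.le, ← one_sub_mul, mul_div_mul_right _ _ (rpow_pos_of_pos hs p).ne']

theorem continuousOn_profileIntegrand (hr : 0 < r) (hn : r ≤ n) (hH : 0 ≤ H)
    (hq : ∀ ξ ∈ Ioo 0 ρ, 0 < profileQ n r H ξ) :
    ContinuousOn (profileIntegrand n r H) (Ico 0 ρ) := by
  intro ξ hξ
  rcases hξ.1.eq_or_lt with rfl | hξ0
  · have hzero : profileIntegrand n r H 0 = 0 := by
      simp [profileIntegrand, profileNumerator, profileIntegral,
        zero_rpow (by positivity : (2 : ℝ) / r ≠ 0)]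
    have : ContinuousWithinAt (profileIntegrand n r H) (Ioi 0) 0 := by
      simpa only [ContinuousWithinAt, hzero] using tendsto_profileIntegrand_zero hr hn hH
    exact (continuousWithinAt_Ioi_iff_Ici.1 this).mono Ico_subset_Ici_self
  · exact (continuous_sqrt.continuousAt.comp ((continuous_profileNumerator hr).continuousAt.div
      (continuous_profileQ hr hn).continuousAt (hq ξ ⟨hξ0, hξ.2⟩).ne')).continuousWithinAt

theorem exists_hasDerivAt_profileQ_neg (hr : 0 < r) (hn : r ≤ n) (hH : 0 < H) (hρ : 0 < ρ)
    (hq : profileQ n r H ρ = 0) : ∃ q' < 0, HasDerivAt (profileQ n r H) q' ρ := by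
  set p : ℝ := 2 / r with hp
  set e : ℝ := 2 * ((n : ℝ) - r) / r with he
  have hep : e = ((n : ℝ) - r) * p := by rw [he, hp]; ring
  have hs := sinh_pos_iff.2 hρ
  have hI := profileIntegral_pos (n := n) (r := r) hρ
  have hn' : (0 : ℝ) < n := by exact_mod_cast hr.trans_le hn
  have hb : 0 < (n : ℝ) * H * profileIntegral n r ρ := by positivity
  have hS := (hasDerivAt_sinh ρ).rpow_const (p := e) (Or.inl hs.ne')
  have hB := ((hasDerivAt_profileIntegral (n := n) (r := r) ρ).const_mul ((n : ℝ) * H)).rpow_const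
    (p := p) (Or.inl hb.ne')
  refine ⟨_, ?_, hS.sub hB⟩
  have hBS : ((n : ℝ) * H * profileIntegral n r ρ) ^ p = sinh ρ ^ e := (sub_eq_zero.1 hq).symm
  rw [rpow_sub_one hs.ne', rpow_sub_one hb.ne', hBS]
  set S := sinh ρ ^ e
  have hS0 : 0 < S := rpow_pos_of_pos hs e
  have hfactor : cosh ρ * e * (S / sinh ρ) -
      n * H * profileDensity n r ρ * p * (S / (n * H * profileIntegral n r ρ))
      = p * S / (sinh ρ * profileIntegral n r ρ) *
        (((n : ℝ) - r) * profileIntegral n r ρ * cosh ρ - profileDensity n r ρ * sinh ρ) := by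
    rw [hep]
    field_simp
  rw [hfactor]
  exact mul_neg_of_pos_of_neg (by positivity)
    (sub_neg.2 (sub_mul_profileIntegral_mul_cosh_lt hr (hr.trans_le hn) hρ))

theorem exists_pos_eventually_mul_sub_le_profileQ (hr : 0 < r) (hn : r ≤ n) (hH : 0 < H)
    (hρ : 0 < ρ) (hq : ∀ ξ ∈ Ioo 0 ρ, 0 < profileQ n r H ξ) :
    ∃ ε > 0, ∀ᶠ ξ in 𝓝[<] ρ, ε * (ρ - ξ) ≤ profileQ n r H ξ := by
  have hcont := (continuous_profileQ (H := H) hr hn).continuousAt (x := ρ)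
  have hnonneg : 0 ≤ profileQ n r H ρ :=
    ge_of_tendsto (hcont.tendsto.mono_left nhdsWithin_le_nhds)
      (eventually_of_mem (Ioo_mem_nhdsLT hρ) fun ξ hξ => (hq ξ hξ).le)
  rcases hnonneg.eq_or_lt with hzero | hpos
  · obtain ⟨q', hq', hderiv⟩ := exists_hasDerivAt_profileQ_neg hr hn hH hρ hzero.symm
    refine ⟨-q' / 2, by linarith, ?_⟩
    filter_upwards [hderiv.eventually_sub_mul_le_of_neg hq'] with ξ hξ
    linarith
  · exact ⟨_, half_pos hpos, hcont.eventually_half_mul_sub_le hpos⟩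

theorem exists_eventually_norm_profileIntegrand_le (hr : 0 < r) (hn : r ≤ n) (hH : 0 < H)
    (hρ : 0 < ρ) (hq : ∀ ξ ∈ Ioo 0 ρ, 0 < profileQ n r H ξ) :
    ∃ C, ∀ᶠ ξ in 𝓝[<] ρ, ‖profileIntegrand n r H ξ‖ ≤ C * (ρ - ξ) ^ (-(1 / 2) : ℝ) := by
  obtain ⟨ε, hε, hlow⟩ := exists_pos_eventually_mul_sub_le_profileQ hr hn hH hρ hq
  have hNρ := profileNumerator_nonneg (n := n) (r := r) hH.le hρ.le
  refine ⟨√(profileNumerator n r H ρ / ε), ?_⟩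
  filter_upwards [hlow, Ioo_mem_nhdsLT hρ] with ξ hξq hξ
  have hρξ : 0 < ρ - ξ := sub_pos.2 hξ.2
  rw [profileIntegrand, norm_of_nonneg (sqrt_nonneg _), rpow_neg hρξ.le, ← sqrt_eq_rpow,
    ← sqrt_inv, ← sqrt_mul (by positivity)]
  refine sqrt_le_sqrt ?_
  calc profileNumerator n r H ξ / profileQ n r H ξ
      ≤ profileNumerator n r H ρ / (ε * (ρ - ξ)) :=
        div_le_div₀ hNρ (profileNumerator_le_profileNumerator hr hH.le hξ.1.le hξ.2.le)
          (by positivity) hξq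
    _ = profileNumerator n r H ρ / ε * (ρ - ξ)⁻¹ := by rw [div_mul_eq_div_div, div_eq_mul_inv]

theorem intervalIntegrable_profileIntegrand (hr : 0 < r) (hn : r ≤ n) (hH : 0 < H)
    (hρ : 0 < ρ) (hq : ∀ ξ ∈ Ioo 0 ρ, 0 < profileQ n r H ξ) :
    IntervalIntegrable (profileIntegrand n r H) volume 0 ρ := by
  obtain ⟨C, hC⟩ := exists_eventually_norm_profileIntegrand_le hr hn hH hρ hq
  exact intervalIntegrable_of_continuousOn_Ico_of_norm_le_rpow hρ (by norm_num)
    (continuousOn_profileIntegrand hr hn hH.le hq) hC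

end ProfileIntegrand

/-- monotonicity of the rotational profile height in `H`: if `0 < H₁ < H₂`
and `q_{H₂} > 0` on `(0, ρ)` then `q_{H₁} > 0` on `(0, ρ)` and `λ_{H₁}(ρ) < λ_{H₂}(ρ)`. -/
theorem stmt14 (n r : ℕ) (hr : 2 ≤ r) (hn : r ≤ n) (ρ : ℝ) (hρ : 0 < ρ)
    (H₁ H₂ : ℝ) (hH₁ : 0 < H₁) (hH₁₂ : H₁ < H₂)
    (I : ℝ → ℝ) (qH : ℝ → ℝ → ℝ) (lamH : ℝ → ℝ → ℝ)
    (hI : ∀ ξ : ℝ, I ξ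
      = ∫ s in (0 : ℝ)..ξ, Real.sinh s ^ ((n : ℝ) - 1) / Real.cosh s ^ ((r : ℝ) - 1))
    (hq : ∀ H ξ : ℝ, qH H ξ
      = Real.sinh ξ ^ (2 * ((n : ℝ) - r) / r) - ((n : ℝ) * H * I ξ) ^ (2 / (r : ℝ)))
    (hlam : ∀ H ρ' : ℝ, lamH H ρ'
      = ∫ ξ in (0 : ℝ)..ρ', Real.sqrt ((((n : ℝ) * H * I ξ) ^ (2 / (r : ℝ))) / qH H ξ))
    (hq₂pos : ∀ ξ ∈ Set.Ioo (0 : ℝ) ρ, 0 < qH H₂ ξ) :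
    (∀ ξ ∈ Set.Ioo (0 : ℝ) ρ, 0 < qH H₁ ξ) ∧ lamH H₁ ρ < lamH H₂ ρ := by
  have hr₀ : 0 < r := by omega
  have hn₀ : 0 < n := by omega
  obtain rfl : I = profileIntegral n r :=
    funext fun ξ => (hI ξ).trans (integral_sinh_rpow_div_cosh_rpow hn₀ hr₀ ξ)
  obtain rfl : qH = profileQ n r := funext₂ hq
  have hq₁pos : ∀ ξ ∈ Ioo 0 ρ, 0 < profileQ n r H₁ ξ := fun ξ hξ =>
    (hq₂pos ξ hξ).trans (profileQ_lt_profileQ hr₀ hn₀ hH₁ hH₁₂ hξ.1)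
  refine ⟨hq₁pos, ?_⟩
  rw [hlam, hlam]
  exact integral_lt_integral_of_forall_mem_Ioo_lt hρ
    (intervalIntegrable_profileIntegrand hr₀ hn hH₁ hρ hq₁pos)
    (intervalIntegrable_profileIntegrand hr₀ hn (hH₁.trans hH₁₂) hρ hq₂pos)
    fun ξ hξ => profileIntegrand_lt_profileIntegrand hr₀ hn₀ hH₁ hH₁₂ hξ.1 (hq₂pos ξ hξ)
end

section
/- Let n > r ≥ 2 be integers. For each H > (n−r)/n let ρ₀(H) denote the unique positive zero of g_H(ξ) = sinh(ξ)^{n−r} − n·H·∫₀^ξ sinh(s)^{n−1}/cosh(s)^{r−1} ds. Then ρ₀(H) → ∞ as H → ((n−r)/n)⁺; that is, for every A > 0 there exists δ > 0 such that (n−r)/n < H < (n−r)/n + δ implies ρ₀(H) > A. -/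
/-!
Put `a = n - r`. Since `a · sinh^(a-1) · cosh` is the derivative of `sinh^a`, and the integrand of
`I` equals `sinh^(a-1) · cosh · tanh^r`, we get
`g_H(ξ) = ∫₀^ξ sinh^(a-1) cosh · (a - nH tanh^r)`.
For a fixed `A > 0` we have `n · ((n-r)/n) · tanh(A)^r < n - r`, so `nH tanh(A)^r < n - r` for `H`
close to `(n-r)/n`; then, `tanh` being increasing, the integrand is positive on `(0, A]`, so
`g_H` has no zero in `(0, A]` and `ρ₀(H) > A`.
-/

open Real intervalIntegral

namespace Real

lemma tanh_le_tanh {x y : ℝ} (h : x ≤ y) : tanh x ≤ tanh y := by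
  have mem (z : ℝ) : tanh z ∈ Set.Ioo (-1 : ℝ) 1 := ⟨neg_one_lt_tanh z, tanh_lt_one z⟩
  rwa [← artanh_le_artanh_iff (mem x) (mem y), artanh_tanh, artanh_tanh]

lemma tanh_pos {x : ℝ} (hx : 0 < x) : 0 < tanh x := by
  rw [tanh_eq_sinh_div_cosh]
  exact div_pos (sinh_pos_iff.2 hx) (cosh_pos x)

lemma hasDerivAt_sinh_rpow {a : ℝ} (ha : 1 ≤ a) (x : ℝ) :
    HasDerivAt (fun s => sinh s ^ a) (a * sinh x ^ (a - 1) * cosh x) x :=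
  (hasDerivAt_rpow_const (Or.inr ha)).comp x (hasDerivAt_sinh x)

lemma integral_mul_sinh_rpow_mul_cosh {a : ℝ} (ha : 1 ≤ a) (ξ : ℝ) :
    ∫ s in (0 : ℝ)..ξ, a * sinh s ^ (a - 1) * cosh s = sinh ξ ^ a := by
  have hcont : Continuous fun s => a * sinh s ^ (a - 1) * cosh s :=
    (continuous_const.mul (continuous_sinh.rpow_const fun _ => Or.inr (by linarith))).mul
      continuous_cosh
  rw [integral_eq_sub_of_hasDerivAt (fun x _ => hasDerivAt_sinh_rpow ha x)
    (hcont.intervalIntegrable 0 ξ), sinh_zero, zero_rpow (by linarith), sub_zero]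

lemma sinh_rpow_div_cosh_rpow_eq {s : ℝ} (hs : 0 < s) (a r : ℝ) :
    sinh s ^ (a + r - 1) / cosh s ^ (r - 1) = sinh s ^ (a - 1) * cosh s * tanh s ^ r := by
  have hS := sinh_pos_iff.2 hs
  have hC := cosh_pos s
  rw [tanh_eq_sinh_div_cosh, div_rpow hS.le hC.le, show a + r - 1 = a - 1 + r by ring,
    rpow_add hS, rpow_sub_one hC.ne']
  field_simp

lemma mul_sinh_rpow_div_cosh_rpow_lt {a r c A s : ℝ} (hr : 0 ≤ r) (hc : 0 ≤ c)
    (hcA : c * tanh A ^ r < a) (hs : 0 < s) (hsA : s ≤ A) :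
    c * (sinh s ^ (a + r - 1) / cosh s ^ (r - 1)) < a * sinh s ^ (a - 1) * cosh s := by
  have hpos : 0 < sinh s ^ (a - 1) * cosh s :=
    mul_pos (rpow_pos_of_pos (sinh_pos_iff.2 hs) _) (cosh_pos s)
  have hcs : c * tanh s ^ r < a := lt_of_le_of_lt
    (mul_le_mul_of_nonneg_left (rpow_le_rpow (tanh_pos hs).le (tanh_le_tanh hsA) hr) hc) hcA
  rw [sinh_rpow_div_cosh_rpow_eq hs]
  nlinarith

lemma mul_integral_sinh_rpow_div_cosh_rpow_lt {a r c A ξ : ℝ} (ha : 1 ≤ a) (hr : 0 ≤ r)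
    (hc : 0 ≤ c) (hcA : c * tanh A ^ r < a) (hξ : 0 < ξ) (hξA : ξ ≤ A) :
    c * ∫ s in (0 : ℝ)..ξ, sinh s ^ (a + r - 1) / cosh s ^ (r - 1) < sinh ξ ^ a := by
  rw [← integral_mul_sinh_rpow_mul_cosh ha, ← integral_const_mul]
  refine integral_lt_integral_of_continuousOn_of_le_of_exists_lt hξ ?_ ?_
    (fun s hs => (mul_sinh_rpow_div_cosh_rpow_lt hr hc hcA hs.1 (hs.2.trans hξA)).le)
    ⟨ξ, Set.right_mem_Icc.2 hξ.le, mul_sinh_rpow_div_cosh_rpow_lt hr hc hcA hξ hξA⟩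
  · exact (continuous_const.mul ((continuous_sinh.rpow_const fun _ => Or.inr (by linarith)).div
      (continuous_cosh.rpow_const fun x => Or.inl (cosh_pos x).ne')
      fun x => (rpow_pos_of_pos (cosh_pos x) _).ne')).continuousOn
  · exact ((continuous_const.mul (continuous_sinh.rpow_const fun _ => Or.inr (by linarith))).mul
      continuous_cosh).continuousOn

end Real

/-- for `n > r ≥ 2`, let `ρ₀(H)` denote, for each `H > (n−r)/n`, the unique
positive zero of `g_H(ξ) = sinh(ξ)^(n−r) − nH·I(ξ)`. Then `ρ₀(H) → ∞` as
`H → ((n−r)/n)⁺`: for every `A > 0` there is `δ > 0` such that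
`(n−r)/n < H < (n−r)/n + δ` implies `ρ₀(H) > A`. -/
theorem stmt15 (n r : ℕ) (hr : 2 ≤ r) (hnr : r < n)
    (I : ℝ → ℝ)
    (hI : ∀ ξ : ℝ, I ξ
      = ∫ s in (0 : ℝ)..ξ, Real.sinh s ^ ((n : ℝ) - 1) / Real.cosh s ^ ((r : ℝ) - 1))
    (ρ₀ : ℝ → ℝ)
    (hρ₀ : ∀ H : ℝ, ((n : ℝ) - r) / n < H →
      0 < ρ₀ H ∧
      Real.sinh (ρ₀ H) ^ ((n : ℝ) - r) - (n : ℝ) * H * I (ρ₀ H) = 0 ∧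
      (∀ ξ : ℝ, 0 < ξ →
        Real.sinh ξ ^ ((n : ℝ) - r) - (n : ℝ) * H * I ξ = 0 → ξ = ρ₀ H)) :
    ∀ A : ℝ, 0 < A → ∃ δ : ℝ, 0 < δ ∧
      ∀ H : ℝ, ((n : ℝ) - r) / n < H → H < ((n : ℝ) - r) / n + δ → A < ρ₀ H := by
  intro A hA
  have hrn : (r : ℝ) + 1 ≤ n := by exact_mod_cast hnr
  have hr0 : (0 : ℝ) < r := by exact_mod_cast (by omega : 0 < r)
  have hn : (0 : ℝ) < n := by linarith
  have hlim : (n : ℝ) * (((n : ℝ) - r) / n) * tanh A ^ (r : ℝ) < n - r := by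
    rw [mul_div_cancel₀ _ hn.ne']
    exact mul_lt_of_lt_one_right (by linarith) (rpow_lt_one (tanh_pos hA).le (tanh_lt_one A) hr0)
  obtain ⟨δ, hδ, hnear⟩ := Metric.eventually_nhds_iff.1 <|
    ((continuous_const.mul continuous_id).mul continuous_const).continuousAt.eventually_lt
      continuousAt_const hlim
  refine ⟨δ, hδ, fun H hH hHδ => ?_⟩
  by_contra! hρA
  obtain ⟨hρ, hzero, -⟩ := hρ₀ H hH
  have hc : 0 ≤ (n : ℝ) * H := mul_nonneg hn.le ((div_nonneg (by linarith) hn.le).trans hH.le)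
  have hgpos := mul_integral_sinh_rpow_div_cosh_rpow_lt (by linarith) hr0.le hc
    (hnear (by rw [dist_eq, abs_lt]; constructor <;> linarith)) hρ hρA
  rw [hI, show (n : ℝ) - 1 = n - r + r - 1 by ring] at hzero
  linarith
end
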